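/- arXiv:math/0606460 — 6 statements merged into one kernel-verified Lean document; each statement's English description precedes it below -/
import Mathlib

section
/- Let a_1 < a_2 < ... < a_n be integers, e ≥ 2, t_i = ⌈a_i/e⌉ and c_i = a_i − e·t_i for each i. Suppose 1 ≤ s ≤ r ≤ n with a_{s-1} < a_r − e < a_s (the first inequality vacuous if s = 1), and let u be the least index with t_u = t_r. Then c_u < c_{u+1} < ... < c_r, and if s < u, then c_r < c_s < c_{s+1} < ... < c_{u-1}. -/
/-!
Since `-e < aᵢ - e·tᵢ ≤ 0`, the quotient `tᵢ` is monotone in `aᵢ`, and it can drop by at most one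
when `aᵢ` drops by less than `e`. Hence `t` is constant (`= t_r`) on `[u, r]`, and on `[s, u)` it
equals `t_r - 1`, because `a_r - e < a_s ≤ a_k` there. On a block where `t` is constant the residues
`cᵢ = aᵢ - e·t` increase with `aᵢ`, and `c_r < c_s` is exactly `a_r - e < a_s`.
-/

open Set

theorem MonotoneOn.eq_of_mem_Icc {α β : Type*} [Preorder α] [PartialOrder β] {f : α → β}
    {s : Set α} {u r k : α} (hf : MonotoneOn f s) (hsub : Icc u r ⊆ s) (hu : f u = f r)
    (hk : k ∈ Icc u r) : f k = f r := by
  have hur : u ≤ r := hk.1.trans hk.2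
  refine le_antisymm (hf (hsub hk) (hsub (right_mem_Icc.2 hur)) hk.2) ?_
  rw [← hu]
  exact hf (hsub (left_mem_Icc.2 hur)) (hsub hk) hk.1

section Quotient

variable {e a b t t' : ℤ}

theorem quotient_le_of_le (he : 0 ≤ e) (ha : -e < a - e * t) (hb : b - e * t' ≤ 0)
    (hab : a ≤ b) : t ≤ t' := by
  by_contra! h
  have := mul_le_mul_of_nonneg_left (show t' + 1 ≤ t by omega) he
  linarith

theorem sub_one_le_quotient (he : 0 ≤ e) (ha : -e < a - e * t) (hb : b - e * t' ≤ 0)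
    (hab : a - e < b) : t - 1 ≤ t' :=
  quotient_le_of_le he (by linarith) hb hab.le

end Quotient

section Sequence

variable {n : ℕ} {e : ℤ} {a t : ℕ → ℤ}

theorem monotoneOn_quotient (he : 0 ≤ e) (ha : MonotoneOn a (Icc 1 n))
    (ht : ∀ i ∈ Icc 1 n, -e < a i - e * t i ∧ a i - e * t i ≤ 0) :
    MonotoneOn t (Icc 1 n) := fun i hi j hj hij =>
  quotient_le_of_le he (ht i hi).1 (ht j hj).2 (ha hi hj hij)

theorem strictMonoOn_residue_of_quotient_eq {s : Set ℕ} {q : ℤ} (ha : StrictMonoOn a s)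
    (hq : ∀ k ∈ s, t k = q) : StrictMonoOn (fun k => a k - e * t k) s := by
  intro k hk l hl hkl
  simp only [hq k hk, hq l hl]
  linarith [ha hk hl hkl]

end Sequence

theorem residue_sequence_structure_general (n e : ℕ) (a t : ℕ → ℤ) (s r u : ℕ)
    (hmono : ∀ i j : ℕ, 1 ≤ i → i < j → j ≤ n → a i < a j)
    (ht : ∀ i : ℕ, 1 ≤ i → i ≤ n → -(e : ℤ) < a i - e * t i ∧ a i - e * t i ≤ 0)
    (hs : 1 ≤ s) (hsr : s ≤ r) (hrn : r ≤ n)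
    (hgt : a r - (e : ℤ) < a s)
    (hu1 : 1 ≤ u) (hun : u ≤ n) (hu : t u = t r)
    (hleast : ∀ k : ℕ, 1 ≤ k → k ≤ n → t k = t r → u ≤ k) :
    (∀ k l : ℕ, u ≤ k → k < l → l ≤ r → a k - e * t k < a l - e * t l) ∧
      (s < u → (a r - e * t r < a s - e * t s ∧
        ∀ k l : ℕ, s ≤ k → k < l → l < u → a k - e * t k < a l - e * t l)) := by
  have ha : StrictMonoOn a (Icc 1 n) := fun i hi j hj hij => hmono i j hi.1 hij hj.2
  have ht' (i : ℕ) (hi : i ∈ Icc 1 n) := ht i hi.1 hi.2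
  have he : (0 : ℤ) ≤ e := by positivity
  have htm := monotoneOn_quotient he ha.monotoneOn ht'
  have hr : r ∈ Icc 1 n := ⟨hs.trans hsr, hrn⟩
  have hupper : ∀ k ∈ Icc u r, t k = t r := fun k hk =>
    htm.eq_of_mem_Icc (Icc_subset_Icc hu1 hrn) hu hk
  have hsu_sub : Ico s u ⊆ Icc 1 n := fun k hk => ⟨hs.trans hk.1, hk.2.le.trans hun⟩
  have hlower : ∀ k ∈ Ico s u, t k = t r - 1 := fun k hk => by
    have hk' := hsu_sub hk
    have hle : t k ≤ t r := hu ▸ htm hk' ⟨hu1, hun⟩ hk.2.le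
    have hne : t k ≠ t r := fun h => (hleast k hk'.1 hk'.2 h).not_gt hk.2
    have hge : t r - 1 ≤ t k := sub_one_le_quotient he (ht' r hr).1 (ht' k hk').2
      (hgt.trans_le (ha.monotoneOn ⟨hs, hsr.trans hrn⟩ hk' hk.1))
    omega
  refine ⟨fun k l huk hkl hlr => ?_, fun hsu => ⟨?_, fun k l hsk hkl hlu => ?_⟩⟩
  · exact strictMonoOn_residue_of_quotient_eq (ha.mono (Icc_subset_Icc hu1 hrn)) hupper
      ⟨huk, hkl.le.trans hlr⟩ ⟨huk.trans hkl.le, hlr⟩ hkl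
  · rw [hlower s ⟨le_rfl, hsu⟩]
    linarith
  · exact strictMonoOn_residue_of_quotient_eq (ha.mono hsu_sub) hlower ⟨hsk, hkl.trans hlu⟩ ⟨hsk.trans hkl.le, hlu⟩ hkl

/-- Let `a₁ < a₂ < ... < aₙ` be integers, `e ≥ 2`, `tᵢ = ⌈aᵢ/e⌉` (the unique integer
with `-e < aᵢ - e·tᵢ ≤ 0`) and `cᵢ = aᵢ - e·tᵢ`.  Suppose `1 ≤ s ≤ r ≤ n` with
`a_{s-1} < a_r − e < a_s` (first inequality vacuous if `s = 1`), and `u` is the least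
index with `t_u = t_r`.  Then `c_u < c_{u+1} < ... < c_r`, and if `s < u` then
`c_r < c_s < c_{s+1} < ... < c_{u-1}`. -/
theorem residue_sequence_structure (n e : ℕ) (he : 2 ≤ e) (a t : ℕ → ℤ) (s r u : ℕ)
    (hmono : ∀ i j : ℕ, 1 ≤ i → i < j → j ≤ n → a i < a j)
    (ht : ∀ i : ℕ, 1 ≤ i → i ≤ n → -(e : ℤ) < a i - e * t i ∧ a i - e * t i ≤ 0)
    (hs : 1 ≤ s) (hsr : s ≤ r) (hrn : r ≤ n)
    (hlt : ∀ k : ℕ, 1 ≤ k → k < s → a k < a r - e)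
    (hgt : a r - (e : ℤ) < a s)
    (hu1 : 1 ≤ u) (hun : u ≤ n) (hu : t u = t r)
    (hleast : ∀ k : ℕ, 1 ≤ k → k ≤ n → t k = t r → u ≤ k) :
    (∀ k l : ℕ, u ≤ k → k < l → l ≤ r → a k - e * t k < a l - e * t l) ∧
      (s < u → (a r - e * t r < a s - e * t s ∧
        ∀ k l : ℕ, s ≤ k → k < l → l < u → a k - e * t k < a l - e * t l)) :=
  residue_sequence_structure_general n e a t s r u hmono ht hs hsr hrn hgt hu1 hun hu hleast
end

section
/- Let a_1 < a_2 < ... < a_n be integers, e ≥ 2, t_i = ⌈a_i/e⌉. Suppose 1 ≤ s ≤ r ≤ n with a_{s-1} < a_r − e < a_s, and let a' = (a_1,...,a_{s-1}, a_r − e, a_s,...,a_{r-1}, a_{r+1},...,a_n), with t'_i = ⌈a'_i/e⌉. Let u be the least index with t_u = t_r. Then (t'_1,...,t'_n) = (t_1,...,t_n) − ε_u, where ε_u is the u-th standard basis vector. -/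
/-!
Both `t` and `t'` are the sequences `⌈x / e⌉` of `a` and `a'`, and `x ↦ ⌈x / e⌉` is monotone with
`⌈(x - e) / e⌉ = ⌈x / e⌉ - 1`. Hence `t' = t` outside `[s, r]` and `t'_s = t_r - 1`. On `[s, r]`
the sequence `t` is squeezed between `t_r - 1 ≤ t_s` (because `a_s > a_r - e`) and `t_r`, so it equals
`t_r - 1` before `u` and `t_r` from `u` on; shifting this block one step to the right and putting
`t_r - 1` in front changes it only at position `u`.
-/

theorem eq_ceil_div_of_bounds {e x t : ℤ} (h₁ : -e < x - e * t) (h₂ : x - e * t ≤ 0) :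
    t = ⌈(x : ℚ) / e⌉ := by
  have he : (0 : ℚ) < e := by exact_mod_cast (by linarith : (0 : ℤ) < e)
  have h₁' : ((e * t - e : ℤ) : ℚ) < x := by exact_mod_cast (by linarith : e * t - e < x)
  have h₂' : (x : ℚ) ≤ ((e * t : ℤ) : ℚ) := by exact_mod_cast (by linarith : x ≤ e * t)
  push_cast at h₁' h₂'
  symm
  rw [Int.ceil_eq_iff, lt_div_iff₀ he, div_le_iff₀ he]
  constructor <;> linarith

theorem ceil_div_mono {e : ℤ} (he : 0 ≤ e) {x y : ℤ} (h : x ≤ y) :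
    ⌈(x : ℚ) / e⌉ ≤ ⌈(y : ℚ) / e⌉ :=
  Int.ceil_mono (div_le_div_of_nonneg_right (by exact_mod_cast h) (by exact_mod_cast he))

theorem ceil_div_sub_self (x : ℤ) {e : ℤ} (he : e ≠ 0) :
    ⌈((x - e : ℤ) : ℚ) / e⌉ = ⌈(x : ℚ) / e⌉ - 1 := by
  rw [Int.cast_sub, sub_div, div_self (by exact_mod_cast he), Int.ceil_sub_one]

theorem eq_ite_of_monotoneOn_of_forall_ne {t : ℕ → ℤ} {s r u : ℕ}
    (hmono : MonotoneOn t (Set.Icc s r)) (hsu : s ≤ u) (hur : u ≤ r)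
    (hts : t r - 1 ≤ t s) (hu : t u = t r) (hne : ∀ j, s ≤ j → j < u → t j ≠ t r)
    {j : ℕ} (hsj : s ≤ j) (hjr : j ≤ r) :
    t j = if j < u then t r - 1 else t r := by
  have hjr' := hmono ⟨hsj, hjr⟩ ⟨hsj.trans hjr, le_rfl⟩ hjr
  split_ifs with hju
  · have := hmono ⟨le_rfl, hsj.trans hjr⟩ ⟨hsj, hjr⟩ hsj
    have := hne j hsj hju
    omega
  · have := hmono ⟨hsu, hur⟩ ⟨hsj, hjr⟩ (not_lt.mp hju)
    omega

theorem eq_sub_ite_of_move {t t' : ℕ → ℤ} {s r u k : ℕ} (hsu : s ≤ u) (hur : u ≤ r)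
    (hblock : ∀ j, s ≤ j → j ≤ r → t j = if j < u then t r - 1 else t r)
    (hbefore : k < s → t' k = t k) (hat : t' s = t r - 1)
    (hmid : s < k → k ≤ r → t' k = t (k - 1)) (hafter : r < k → t' k = t k) :
    t' k = t k - if k = u then 1 else 0 := by
  rcases lt_trichotomy k s with hks | rfl | hsk
  · rw [hbefore hks, if_neg (by omega), sub_zero]
  · have := hblock k le_rfl (hsu.trans hur)
    rw [hat]
    split_ifs at * <;> omega
  · rcases le_or_gt k r with hkr | hrk
    · have := hblock (k - 1) (by omega) (by omega)
      have := hblock k hsk.le hkr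
      rw [hmid hsk hkr]
      split_ifs at * <;> omega
    · rw [hafter hrk, if_neg (by omega), sub_zero]

theorem ceil_after_move_general (n e : ℕ) (a a' t t' : ℕ → ℤ) (s r u : ℕ)
    (hmono : ∀ i j : ℕ, 1 ≤ i → i < j → j ≤ n → a i < a j)
    (ht : ∀ i : ℕ, 1 ≤ i → i ≤ n → -(e : ℤ) < a i - e * t i ∧ a i - e * t i ≤ 0)
    (ht' : ∀ i : ℕ, 1 ≤ i → i ≤ n → -(e : ℤ) < a' i - e * t' i ∧ a' i - e * t' i ≤ 0)
    (hs : 1 ≤ s) (hsr : s ≤ r) (hrn : r ≤ n)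
    (hlt : ∀ k : ℕ, 1 ≤ k → k < s → a k < a r - e)
    (hgt : a r - (e : ℤ) < a s)
    (ha'1 : ∀ k : ℕ, 1 ≤ k → k < s → a' k = a k)
    (ha's : a' s = a r - e)
    (ha'2 : ∀ k : ℕ, s < k → k ≤ r → a' k = a (k - 1))
    (ha'3 : ∀ k : ℕ, r < k → k ≤ n → a' k = a k)
    (hu1 : 1 ≤ u) (hu : t u = t r)
    (hleast : ∀ k : ℕ, 1 ≤ k → k ≤ n → t k = t r → u ≤ k) :
    ∀ k : ℕ, 1 ≤ k → k ≤ n → t' k = t k - (if k = u then 1 else 0) := by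
  intro k hk1 hkn
  have he : (0 : ℤ) < e := by linarith [ht k hk1 hkn]
  set c : ℤ → ℤ := fun x => ⌈(x : ℚ) / ((e : ℤ) : ℚ)⌉
  have hc : ∀ i ∈ Set.Icc 1 n, t i = c (a i) := fun i hi =>
    eq_ceil_div_of_bounds (ht i hi.1 hi.2).1 (ht i hi.1 hi.2).2
  have hc' : ∀ i ∈ Set.Icc 1 n, t' i = c (a' i) := fun i hi =>
    eq_ceil_div_of_bounds (ht' i hi.1 hi.2).1 (ht' i hi.1 hi.2).2
  have hcmono : Monotone c := fun x y h => ceil_div_mono he.le h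
  have hcsub : ∀ x, c (x - e) = c x - 1 := fun x => ceil_div_sub_self x he.ne'
  have hr : r ∈ Set.Icc 1 n := ⟨hs.trans hsr, hrn⟩
  have hamono : StrictMonoOn a (Set.Icc 1 n) := fun i hi j hj hij => hmono i j hi.1 hij hj.2
  have htmono : MonotoneOn t (Set.Icc 1 n) := fun i hi j hj hij => by
    rw [hc i hi, hc j hj]
    exact hcmono (hamono.monotoneOn hi hj hij)
  have hbelow : ∀ j, 1 ≤ j → j < s → t j ≤ t r - 1 := fun j hj1 hjs => by
    rw [hc j ⟨hj1, by omega⟩, hc r hr, ← hcsub]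
    exact hcmono (hlt j hj1 hjs).le
  have hts : t r - 1 ≤ t s := by
    rw [hc s ⟨hs, hsr.trans hrn⟩, hc r hr, ← hcsub]
    exact hcmono hgt.le
  have hsu : s ≤ u := by
    by_contra! hus
    linarith [hbelow u hu1 hus]
  have hur : u ≤ r := hleast r hr.1 hr.2 rfl
  refine eq_sub_ite_of_move hsu hur (fun j hsj hjr => eq_ite_of_monotoneOn_of_forall_ne
      (htmono.mono (Set.Icc_subset_Icc hs hrn)) hsu hur hts hu
      (fun i hsi hiu h => absurd (hleast i (by omega) (by omega) h) (by omega)) hsj hjr)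
    (fun hks => ?_) ?_ (fun hsk hkr => ?_) (fun hrk => ?_)
  · rw [hc' k ⟨hk1, hkn⟩, ha'1 k hk1 hks, hc k ⟨hk1, hkn⟩]
  · rw [hc' s ⟨hs, hsr.trans hrn⟩, ha's, hcsub, hc r hr]
  · rw [hc' k ⟨hk1, hkn⟩, ha'2 k hsk hkr, hc (k - 1) ⟨by omega, by omega⟩]
  · rw [hc' k ⟨hk1, hkn⟩, ha'3 k hrk hkn, hc k ⟨hk1, hkn⟩]

/-- Let `a₁ < a₂ < ... < aₙ` be integers, `e ≥ 2`, `tᵢ = ⌈aᵢ/e⌉`.  Suppose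
`1 ≤ s ≤ r ≤ n` with `a_{s-1} < a_r − e < a_s`, let
`a' = (a₁,...,a_{s-1}, a_r − e, a_s,...,a_{r-1}, a_{r+1},...,aₙ)` and `t'ᵢ = ⌈a'ᵢ/e⌉`.
If `u` is the least index with `t_u = t_r`, then `t' = t − ε_u`. -/
theorem ceil_after_move (n e : ℕ) (he : 2 ≤ e) (a a' t t' : ℕ → ℤ) (s r u : ℕ)
    (hmono : ∀ i j : ℕ, 1 ≤ i → i < j → j ≤ n → a i < a j)
    (ht : ∀ i : ℕ, 1 ≤ i → i ≤ n → -(e : ℤ) < a i - e * t i ∧ a i - e * t i ≤ 0)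
    (ht' : ∀ i : ℕ, 1 ≤ i → i ≤ n → -(e : ℤ) < a' i - e * t' i ∧ a' i - e * t' i ≤ 0)
    (hs : 1 ≤ s) (hsr : s ≤ r) (hrn : r ≤ n)
    (hlt : ∀ k : ℕ, 1 ≤ k → k < s → a k < a r - e)
    (hgt : a r - (e : ℤ) < a s)
    (ha'1 : ∀ k : ℕ, 1 ≤ k → k < s → a' k = a k)
    (ha's : a' s = a r - e)
    (ha'2 : ∀ k : ℕ, s < k → k ≤ r → a' k = a (k - 1))
    (ha'3 : ∀ k : ℕ, r < k → k ≤ n → a' k = a k)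
    (hu1 : 1 ≤ u) (hun : u ≤ n) (hu : t u = t r)
    (hleast : ∀ k : ℕ, 1 ≤ k → k ≤ n → t k = t r → u ≤ k) :
    ∀ k : ℕ, 1 ≤ k → k ≤ n → t' k = t k - (if k = u then 1 else 0) :=
  ceil_after_move_general n e a a' t t' s r u hmono ht ht' hs hsr hrn hlt hgt ha'1 ha's ha'2 ha'3
    hu1 hu hleast
end

section
/- Let c_1, ..., c_n be integers, and suppose 1 ≤ s ≤ u ≤ r ≤ n are such that c_u < c_{u+1} < ... < c_r, and (if s < u) c_r < c_s < c_{s+1} < ... < c_{u-1}, and no other c_i for i outside [s,r] changes. Let c' = (c_1,...,c_{s-1}, c_r, c_s,...,c_{r-1}, c_{r+1},...,c_n) be obtained by cyclically moving c_r to position s. Then inv(c) − inv(c') = 2u − (r + s), where inv(d) = |{(i,j) : i < j, d_i > d_j}| is the number of inversions of the sequence d. -/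
/-!
If `c' ∘ σ = c` on `{1, …, n}` for a permutation `σ`, then `inv c − inv c'` is the number of
inversions of `c` whose order `σ` reverses minus the number of non-inversions whose order `σ`
reverses. Moving the entry at position `r` to position `s` reverses exactly the pairs `(k, r)` with
`s ≤ k < r`, so `inv c − inv c' = #{k ∈ [s, r) | c r < c k} − #{k ∈ [s, r) | c k < c r}`. The two
monotone runs make these sets `[s, u)` and `[u, r)`, of sizes `u − s` and `r − u`.
-/

open Finset

/-- The inversion number of the finite integer sequence `d₁, ..., dₙ`:
the number of pairs `(i,j)` with `i < j` and `dᵢ > dⱼ`. -/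
def invNum (n : ℕ) (d : ℕ → ℤ) : ℕ :=
  ((Finset.Icc 1 n ×ˢ Finset.Icc 1 n).filter
    (fun p : ℕ × ℕ => p.1 < p.2 ∧ d p.2 < d p.1)).card

theorem card_filter_and_sub_card_filter_and {α : Type*} (A : Finset α) (P Q R : α → Prop)
    [DecidablePred P] [DecidablePred Q] [DecidablePred R] :
    (#{a ∈ A | P a ∧ R a} : ℤ) - #{a ∈ A | Q a ∧ R a} =
      #{a ∈ A | P a ∧ ¬Q a ∧ R a} - #{a ∈ A | ¬P a ∧ Q a ∧ R a} := by
  have split (P Q : α → Prop) [DecidablePred P] [DecidablePred Q] :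
      #{a ∈ A | P a ∧ R a} = #{a ∈ A | P a ∧ Q a ∧ R a} + #{a ∈ A | P a ∧ ¬Q a ∧ R a} := by
    rw [← card_filter_add_card_filter_not (s := {a ∈ A | P a ∧ R a}) Q, filter_filter,
      filter_filter]
    congr 2 <;> exact filter_congr fun _ _ => by tauto
  have hP := split P Q
  have hQ : #{a ∈ A | Q a ∧ R a} =
      #{a ∈ A | P a ∧ Q a ∧ R a} + #{a ∈ A | ¬P a ∧ Q a ∧ R a} := by
    rw [split Q P]
    congr 2 <;> exact filter_congr fun _ _ => by tauto
  omega

section Relabel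

variable {n : ℕ} {c c' : ℕ → ℤ} (σ : Equiv.Perm ℕ)

theorem invNum_eq_card_of_relabel (hσ : ∀ k, σ k ∈ Icc 1 n ↔ k ∈ Icc 1 n)
    (hc : ∀ k ∈ Icc 1 n, c' (σ k) = c k) :
    invNum n c' = #{p ∈ Icc 1 n ×ˢ Icc 1 n | σ p.1 < σ p.2 ∧ c p.2 < c p.1} := by
  have hσ' : ∀ k, σ.symm k ∈ Icc 1 n ↔ k ∈ Icc 1 n := fun k => by
    simpa using (hσ (σ.symm k)).symm
  symm
  refine card_nbij' (fun p => (σ p.1, σ p.2)) (fun q => (σ.symm q.1, σ.symm q.2)) ?_ ?_ ?_ ?_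
  · rintro ⟨i, j⟩ h
    simp only [coe_filter, mem_product, Set.mem_ofPred_eq, hσ] at h ⊢
    rwa [hc i h.1.1, hc j h.1.2]
  · rintro ⟨i, j⟩ h
    simp only [coe_filter, mem_product, Set.mem_ofPred_eq, hσ'] at h ⊢
    rwa [← hc _ ((hσ' i).2 h.1.1), ← hc _ ((hσ' j).2 h.1.2), σ.apply_symm_apply,
      σ.apply_symm_apply]
  · intro p _; simp
  · intro q _; simp

theorem invNum_sub_invNum_of_relabel (hσ : ∀ k, σ k ∈ Icc 1 n ↔ k ∈ Icc 1 n)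
    (hc : ∀ k ∈ Icc 1 n, c' (σ k) = c k) :
    (invNum n c : ℤ) - invNum n c' =
      #{p ∈ Icc 1 n ×ˢ Icc 1 n | p.1 < p.2 ∧ ¬σ p.1 < σ p.2 ∧ c p.2 < c p.1} -
      #{p ∈ Icc 1 n ×ˢ Icc 1 n | ¬p.1 < p.2 ∧ σ p.1 < σ p.2 ∧ c p.2 < c p.1} := by
  rw [invNum_eq_card_of_relabel σ hσ hc, invNum]
  exact card_filter_and_sub_card_filter_and _ _ _ _

end Relabel

section Rotate

variable {s r : ℕ}

def rotateIcc (h : s ≤ r) : Equiv.Perm ℕ where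
  toFun k := if k = r then s else if s ≤ k ∧ k < r then k + 1 else k
  invFun k := if k = s then r else if s < k ∧ k ≤ r then k - 1 else k
  left_inv k := by dsimp only; split_ifs <;> omega
  right_inv k := by dsimp only; split_ifs <;> omega

theorem rotateIcc_apply (h : s ≤ r) (k : ℕ) :
    rotateIcc h k = if k = r then s else if s ≤ k ∧ k < r then k + 1 else k :=
  rfl

theorem rotateIcc_mem_Icc_iff (h : s ≤ r) {n : ℕ} (hs : 1 ≤ s) (hr : r ≤ n) (k : ℕ) :
    rotateIcc h k ∈ Icc 1 n ↔ k ∈ Icc 1 n := by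
  simp only [rotateIcc_apply, mem_Icc]
  split_ifs <;> omega

theorem lt_and_not_rotateIcc_lt_iff (h : s ≤ r) {i j : ℕ} :
    i < j ∧ ¬rotateIcc h i < rotateIcc h j ↔ i ∈ Ico s r ∧ j = r := by
  simp only [rotateIcc_apply, mem_Ico]
  split_ifs <;> omega

theorem not_lt_and_rotateIcc_lt_iff (h : s ≤ r) {i j : ℕ} :
    ¬i < j ∧ rotateIcc h i < rotateIcc h j ↔ i = r ∧ j ∈ Ico s r := by
  simp only [rotateIcc_apply, mem_Ico]
  split_ifs <;> omega

variable {n : ℕ} (c : ℕ → ℤ)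

theorem card_filter_lt_and_not_rotateIcc_lt (h : s ≤ r) (hs : 1 ≤ s) (hr : r ≤ n) :
    #{p ∈ Icc 1 n ×ˢ Icc 1 n | p.1 < p.2 ∧ ¬rotateIcc h p.1 < rotateIcc h p.2 ∧ c p.2 < c p.1} =
      #{k ∈ Ico s r | c r < c k} := by
  symm
  rw [← card_image_of_injective _ (Prod.mk_left_injective r)]
  apply congrArg card
  ext ⟨i, j⟩
  simp only [mem_filter, mem_product, mem_image, Prod.mk.injEq, ← and_assoc,
    lt_and_not_rotateIcc_lt_iff, mem_Ico, mem_Icc]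
  grind

theorem card_filter_not_lt_and_rotateIcc_lt (h : s ≤ r) (hs : 1 ≤ s) (hr : r ≤ n) :
    #{p ∈ Icc 1 n ×ˢ Icc 1 n | ¬p.1 < p.2 ∧ rotateIcc h p.1 < rotateIcc h p.2 ∧ c p.2 < c p.1} =
      #{k ∈ Ico s r | c k < c r} := by
  symm
  rw [← card_image_of_injective _ (Prod.mk_right_injective r)]
  apply congrArg card
  ext ⟨i, j⟩
  simp only [mem_filter, mem_product, mem_image, Prod.mk.injEq, ← and_assoc,
    not_lt_and_rotateIcc_lt_iff, mem_Ico, mem_Icc]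
  grind

theorem invNum_sub_invNum_rotateIcc {c' : ℕ → ℤ} (h : s ≤ r) (hs : 1 ≤ s) (hr : r ≤ n)
    (hc : ∀ k ∈ Icc 1 n, c' (rotateIcc h k) = c k) :
    (invNum n c : ℤ) - invNum n c' = #{k ∈ Ico s r | c r < c k} - #{k ∈ Ico s r | c k < c r} := by
  rw [invNum_sub_invNum_of_relabel _ (rotateIcc_mem_Icc_iff h hs hr) hc,
    card_filter_lt_and_not_rotateIcc_lt c h hs hr, card_filter_not_lt_and_rotateIcc_lt c h hs hr]

end Rotate

section Chain

variable {c : ℕ → ℤ} {s u r : ℕ}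

theorem filter_Ico_lt_eq_Ico (hsu : s ≤ u) (hur : u ≤ r) (hmono : StrictMonoOn c (Set.Icc u r))
    (hlow : ∀ k ∈ Ico s u, c r < c k) : {k ∈ Ico s r | c k < c r} = Ico u r := by
  ext k
  simp only [mem_filter, mem_Ico]
  constructor
  · rintro ⟨⟨hsk, hkr⟩, hck⟩
    refine ⟨?_, hkr⟩
    by_contra! hku
    exact (hlow k (mem_Ico.2 ⟨hsk, hku⟩)).not_gt hck
  · rintro ⟨huk, hkr⟩
    exact ⟨⟨hsu.trans huk, hkr⟩, hmono ⟨huk, hkr.le⟩ ⟨hur, le_rfl⟩ hkr⟩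

theorem filter_Ico_gt_eq_Ico (hur : u ≤ r) (hmono : StrictMonoOn c (Set.Icc u r))
    (hlow : ∀ k ∈ Ico s u, c r < c k) : {k ∈ Ico s r | c r < c k} = Ico s u := by
  ext k
  simp only [mem_filter, mem_Ico]
  constructor
  · rintro ⟨⟨hsk, hkr⟩, hck⟩
    refine ⟨hsk, ?_⟩
    by_contra! huk
    exact (hmono ⟨huk, hkr.le⟩ ⟨hur, le_rfl⟩ hkr).not_gt hck
  · rintro ⟨hsk, hku⟩
    exact ⟨⟨hsk, hku.trans_le hur⟩, hlow k (mem_Ico.2 ⟨hsk, hku⟩)⟩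

end Chain

/-- Let `c₁, ..., cₙ` be integers and `1 ≤ s ≤ u ≤ r ≤ n` with `c_u < ... < c_r` and
(if `s < u`) `c_r < c_s < ... < c_{u-1}`.  If `c'` is obtained from `c` by cyclically
moving `c_r` to position `s`, then `inv(c) − inv(c') = 2u − (r + s)`. -/
theorem inversions_of_cycle (n : ℕ) (c c' : ℕ → ℤ) (s u r : ℕ)
    (hs : 1 ≤ s) (hsu : s ≤ u) (hur : u ≤ r) (hrn : r ≤ n)
    (hchain1 : ∀ k l : ℕ, u ≤ k → k < l → l ≤ r → c k < c l)
    (hchain2 : s < u → (c r < c s ∧ ∀ k l : ℕ, s ≤ k → k < l → l < u → c k < c l))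
    (hc'1 : ∀ k : ℕ, 1 ≤ k → k < s → c' k = c k)
    (hc's : c' s = c r)
    (hc'2 : ∀ k : ℕ, s < k → k ≤ r → c' k = c (k - 1))
    (hc'3 : ∀ k : ℕ, r < k → k ≤ n → c' k = c k) :
    (invNum n c : ℤ) - invNum n c' = 2 * u - (r + s) := by
  have hsr : s ≤ r := hsu.trans hur
  have hc : ∀ k ∈ Icc 1 n, c' (rotateIcc hsr k) = c k := by
    intro k hk
    rw [mem_Icc] at hk
    rw [rotateIcc_apply]
    split_ifs with hkr hk'
    · rw [hkr, hc's]
    · rw [hc'2 (k + 1) (by omega) (by omega), Nat.add_sub_cancel]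
    · rcases lt_or_ge k s with hks | hks
      · exact hc'1 k hk.1 hks
      · exact hc'3 k (by omega) hk.2
  have hmono : StrictMonoOn c (Set.Icc u r) := fun k hk l hl hkl => hchain1 k l hk.1 hkl hl.2
  have hlow : ∀ k ∈ Ico s u, c r < c k := by
    intro k hk
    rw [mem_Ico] at hk
    obtain ⟨hrs, hchain⟩ := hchain2 (hk.1.trans_lt hk.2)
    rcases hk.1.eq_or_lt with rfl | hsk
    · exact hrs
    · exact hrs.trans (hchain s k le_rfl hsk hk.2)
  rw [invNum_sub_invNum_rotateIcc c hsr hs hrn hc, filter_Ico_gt_eq_Ico hur hmono hlow,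
    filter_Ico_lt_eq_Ico hsu hur hmono hlow, Nat.card_Ico, Nat.card_Ico]
  omega
end

section
/- If λ is a partition with e-weight w, then σ_e(λ') = (−1)^{(e−1)w} · σ_e(λ), where λ' is the conjugate partition. -/
/-- `Reaches e B w t C`: from the bead configuration `B` one removes `w` rim `e`-hooks
(moving a bead from `a` to the vacant `a - e`), with total leg-lengths (beads
crossed) `t`, reaching the `e`-core configuration `C`. -/
inductive Reaches (e : ℕ) : Finset ℕ → ℕ → ℕ → Finset ℕ → Prop
  | core (B : Finset ℕ) (h : ∀ a ∈ B, e ≤ a → a - e ∈ B) : Reaches e B 0 0 B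
  | step (B : Finset ℕ) (w t : ℕ) (C : Finset ℕ) (a : ℕ) (ha : a ∈ B) (hea : e ≤ a)
      (hv : a - e ∉ B)
      (h : Reaches e (insert (a - e) (B.erase a)) w t C) :
      Reaches e B (w + 1) (t + (B.filter (fun b => a - e < b ∧ b < a)).card)  C

/-- The abacus display of the conjugate partition: rotate the display of `λ` (on
positions `0, ..., N-1`) through `π` and interchange beads and vacant positions. -/
def conjDisplay (N : ℕ) (B : Finset ℕ) : Finset ℕ :=
  (Finset.range N \ B).image (fun x => N - 1 - x)

/-! Removing rim `e`-hooks is confluent: if two different beads `a`, `b` of a display can each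
be moved from `x` to `x - e`, the two moves commute and the total leg-lengths of the two orders
agree mod 2, so by induction all removal sequences from a display have the same length, the same
total leg-length mod 2 and the same end configuration.
Conjugation turns the move `a ↦ a - e` on `B` into the move `N - 1 - (a - e) ↦ N - 1 - a` on the
conjugate display; each of the `e - 1` positions strictly in between is a bead of exactly one of
the two displays, so the two leg-lengths add up to `e - 1`. A removal sequence for `λ` with total
leg-length `t` thus yields one for `λ'` with total leg-length `(e - 1) w - t`. -/

open Finset

def IsCore (e : ℕ) (B : Finset ℕ) : Prop := ∀ a ∈ B, e ≤ a → a - e ∈ B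

def Removable (e : ℕ) (B : Finset ℕ) (a : ℕ) : Prop := a ∈ B ∧ e ≤ a ∧ a - e ∉ B

def removeHook (e : ℕ) (B : Finset ℕ) (a : ℕ) : Finset ℕ := insert (a - e) (B.erase a)

def legLength (e : ℕ) (B : Finset ℕ) (a : ℕ) : ℕ :=
  #(B.filter (fun b => a - e < b ∧ b < a))

section

variable {e : ℕ} {B : Finset ℕ} {a b : ℕ}

theorem Removable.sub_lt (ha : Removable e B a) : a - e < a := by
  have : a - e ≠ a := fun h => ha.2.2 (by rw [h]; exact ha.1)
  omega

theorem Removable.removeHook_of_ne (ha : Removable e B a) (hb : Removable e B b) (hab : a ≠ b) :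
    Removable e (removeHook e B a) b := by
  refine ⟨mem_insert_of_mem (mem_erase.2 ⟨hab.symm, hb.1⟩), hb.2.1, ?_⟩
  simp only [removeHook, mem_insert, mem_erase, not_or, not_and_or]
  exact ⟨by have := ha.2.1; have := hb.2.1; omega, Or.inr hb.2.2⟩

theorem removeHook_comm (ha : Removable e B a) (hb : Removable e B b) :
    removeHook e (removeHook e B a) b = removeHook e (removeHook e B b) a := by
  have hba : a - e ≠ b := fun h => ha.2.2 (h ▸ hb.1)
  have hab' : b - e ≠ a := fun h => hb.2.2 (h ▸ ha.1)
  simp only [removeHook]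
  rw [erase_insert_of_ne hba, erase_insert_of_ne hab', insert_comm, erase_right_comm]

theorem legLength_removeHook (ha : a ∈ B) (hv : a - e ∉ B) (b : ℕ) :
    legLength e (removeHook e B a) b + (if b - e < a ∧ a < b then 1 else 0)
      = legLength e B b + (if b - e < a - e ∧ a - e < b then 1 else 0) := by
  have hv' : a - e ∉ B.erase a := fun h => hv (mem_of_mem_erase h)
  have := sum_erase_add B (fun x => if b - e < x ∧ x < b then 1 else 0) ha
  simp only [legLength, removeHook, card_filter, sum_insert hv'] at this ⊢
  omega

theorem legLength_removeHook_add_legLength_mod_two (ha : Removable e B a) (hb : Removable e B b) :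
    (legLength e (removeHook e B a) b + legLength e B a) % 2
      = (legLength e (removeHook e B b) a + legLength e B b) % 2 := by
  have hab := legLength_removeHook ha.1 ha.2.2 b
  have hba := legLength_removeHook hb.1 hb.2.2 a
  have := ha.2.1
  have := hb.2.1
  split_ifs at hab hba <;> omega

theorem mem_conjDisplay {N x : ℕ} : x ∈ conjDisplay N B ↔ x < N ∧ N - 1 - x ∉ B := by
  simp only [conjDisplay, mem_image, mem_sdiff, mem_range]
  constructor
  · rintro ⟨y, ⟨hyN, hyB⟩, rfl⟩
    exact ⟨by omega, by rwa [show N - 1 - (N - 1 - y) = y by omega]⟩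
  · rintro ⟨hxN, hxB⟩
    exact ⟨N - 1 - x, ⟨by omega, hxB⟩, by omega⟩

theorem IsCore.conjDisplay (hC : IsCore e B) (N : ℕ) : IsCore e (conjDisplay N B) := by
  intro d hd hed
  rw [mem_conjDisplay] at hd ⊢
  refine ⟨by omega, fun h => hd.2 ?_⟩
  have := hC _ h (by omega)
  rwa [show N - 1 - (d - e) - e = N - 1 - d by omega] at this

theorem Removable.conjDisplay {N : ℕ} (ha : Removable e B a) (haN : a < N) :
    Removable e (conjDisplay N B) (N - 1 - (a - e)) := by
  have := ha.2.1
  refine ⟨mem_conjDisplay.2 ⟨by omega, ?_⟩, by omega, fun h => (mem_conjDisplay.1 h).2 ?_⟩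
  · rw [show N - 1 - (N - 1 - (a - e)) = a - e by omega]; exact ha.2.2
  · rw [show N - 1 - (N - 1 - (a - e) - e) = a by omega]; exact ha.1

theorem removeHook_conjDisplay {N : ℕ} (he : 0 < e) (hea : e ≤ a) (haN : a < N) :
    removeHook e (conjDisplay N B) (N - 1 - (a - e)) = conjDisplay N (removeHook e B a) := by
  ext x
  simp only [removeHook, mem_insert, mem_erase, mem_conjDisplay]
  grind

theorem legLength_conjDisplay_add_legLength {N : ℕ} (hea : e ≤ a) (haN : a < N) :
    legLength e (conjDisplay N B) (N - 1 - (a - e)) + legLength e B a = e - 1 := by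
  have hB : legLength e B a = #((Ioo (a - e) a).filter (· ∈ B)) := by
    unfold legLength
    congr 1
    ext x
    simp only [mem_filter, mem_Ioo]
    tauto
  have hconj :
      legLength e (conjDisplay N B) (N - 1 - (a - e)) = #((Ioo (a - e) a).filter (· ∉ B)) := by
    apply card_nbij' (fun x => N - 1 - x) (fun x => N - 1 - x) <;> intro x hx <;>
      grind [mem_conjDisplay]
  rw [hB, hconj, add_comm, card_filter_add_card_filter_not, Nat.card_Ioo]
  omega

theorem Reaches.of_removeHook (ha : Removable e B a) {w t : ℕ} {C : Finset ℕ}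
    (h : Reaches e (removeHook e B a) w t C) : Reaches e B (w + 1) (t + legLength e B a) C :=
  .step B w t C a ha.1 ha.2.1 ha.2.2 h

theorem exists_reaches (e : ℕ) (B : Finset ℕ) : ∃ w t C, Reaches e B w t C := by
  induction hs : B.sum id using Nat.strong_induction_on generalizing B with
  | _ s ih =>
    by_cases hB : IsCore e B
    · exact ⟨0, 0, B, .core B hB⟩
    obtain ⟨a, ha⟩ : ∃ a, Removable e B a := by
      simpa [IsCore, Removable] using hB
    have hsum : (removeHook e B a).sum id < s := by
      have hv : a - e ∉ B.erase a := fun h => ha.2.2 (mem_of_mem_erase h)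
      have hB := sum_erase_add B id ha.1
      have := ha.sub_lt
      rw [removeHook, sum_insert hv]
      simp only [id_eq] at hB hs ⊢
      omega
    obtain ⟨w, t, C, h⟩ := ih _ hsum _ rfl
    exact ⟨w + 1, _, C, Reaches.of_removeHook ha h⟩

namespace Reaches

theorem unique {w t w' t' : ℕ} {C C' : Finset ℕ} (h : Reaches e B w t C)
    (h' : Reaches e B w' t' C') : w = w' ∧ t % 2 = t' % 2 ∧ C = C' := by
  induction w using Nat.strong_induction_on generalizing B t C w' t' C' with
  | _ w ih =>
    cases h with
    | core _ hC =>
      cases h' with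
      | core => exact ⟨rfl, rfl, rfl⟩
      | step _ _ _ _ b hb heb hvb => exact absurd (hC b hb heb) hvb
    | step _ w₁ t₁ _ a ha hea hva h₁ =>
      cases h' with
      | core _ hC => exact absurd (hC a ha hea) hva
      | step _ w₂ t₂ _ b hb heb hvb h₂ =>
        have ha : Removable e B a := ⟨ha, hea, hva⟩
        have hb : Removable e B b := ⟨hb, heb, hvb⟩
        by_cases hab : a = b
        · subst hab
          obtain ⟨hw, ht, hC⟩ := ih w₁ (Nat.lt_succ_self _) h₁ h₂
          exact ⟨by omega, by omega, hC⟩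
        obtain ⟨w₃, t₃, D, hD⟩ := exists_reaches e (removeHook e (removeHook e B a) b)
        have hab' := of_removeHook (ha.removeHook_of_ne hb hab) hD
        have hba' := of_removeHook (hb.removeHook_of_ne ha (Ne.symm hab))
          (removeHook_comm ha hb ▸ hD)
        obtain ⟨rfl, ht₁, rfl⟩ := ih w₁ (Nat.lt_succ_self _) h₁ hab'
        obtain ⟨rfl, ht₂, rfl⟩ := ih _ (Nat.lt_succ_self _) hba' h₂
        have := legLength_removeHook_add_legLength_mod_two ha hb
        refine ⟨rfl, ?_, rfl⟩
        change (t₁ + legLength e B a) % 2 = (t₂ + legLength e B b) % 2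
        omega

theorem conjDisplay {N w t : ℕ} {C : Finset ℕ} (h : Reaches e B w t C) (hB : B ⊆ range N) :
    ∃ s, s + t = (e - 1) * w ∧ Reaches e (conjDisplay N B) w s (conjDisplay N C) := by
  induction h with
  | core B hC => exact ⟨0, by simp, .core _ (IsCore.conjDisplay hC N)⟩
  | step B w t C a ha hea hva _ ih =>
    have ha : Removable e B a := ⟨ha, hea, hva⟩
    have haN : a < N := mem_range.1 (hB ha.1)
    have hmove : removeHook e B a ⊆ range N :=
      insert_subset (mem_range.2 (by omega)) ((erase_subset a B).trans hB)
    obtain ⟨s, hs, hconj⟩ := ih hmove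
    refine ⟨s + legLength e (_root_.conjDisplay N B) (N - 1 - (a - e)), ?_,
      of_removeHook (ha.conjDisplay haN) ?_⟩
    · have := legLength_conjDisplay_add_legLength (B := B) hea haN
      change _ + (t + legLength e B a) = _
      rw [Nat.mul_succ]
      omega
    · rwa [removeHook_conjDisplay (by have := ha.sub_lt; omega) hea haN]

end Reaches

end

theorem sign_of_conjugate_general (e N : ℕ) (B : Finset ℕ)
    (hB : B ⊆ Finset.range N)
    (w t : ℕ) (C : Finset ℕ) (hreach : Reaches e B w t C)
    (w' t' : ℕ) (C' : Finset ℕ) (hreach' : Reaches e (conjDisplay N B) w' t' C') :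
    (-1 : ℤ) ^ t' = (-1 : ℤ) ^ ((e - 1) * w) * (-1 : ℤ) ^ t := by
  obtain ⟨s, hs, hconj⟩ := hreach.conjDisplay hB
  obtain ⟨-, hparity, -⟩ := hconj.unique hreach'
  rw [← pow_add, neg_one_pow_eq_pow_mod_two, neg_one_pow_eq_pow_mod_two (_ + t)]
  congr 1
  omega

/-- If `λ` is a partition with `e`-weight `w`, then
`σ_e(λ') = (−1)^{(e−1)w} · σ_e(λ)`, where `λ'` is the conjugate partition:
here `B` is a bead display of `λ`, `conjDisplay N B` one of `λ'`, and
`σ_e = (−1)^{total leg-lengths}` along any removal sequence reaching the `e`-core. -/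
theorem sign_of_conjugate (e N : ℕ) (he : 2 ≤ e) (B : Finset ℕ)
    (hB : B ⊆ Finset.range N)
    (w t : ℕ) (C : Finset ℕ) (hreach : Reaches e B w t C)
    (w' t' : ℕ) (C' : Finset ℕ) (hreach' : Reaches e (conjDisplay N B) w' t' C') :
    (-1 : ℤ) ^ t' = (-1 : ℤ) ^ ((e - 1) * w) * (-1 : ℤ) ^ t :=
  sign_of_conjugate_general e N B hB w t C hreach w' t' C' hreach'
end

section
/- Let λ be an e-regular partition with e-weight w. Given that d_{m(λ)', λ}(v) = v^w and that nonzero v-decomposition numbers d_{μν}(v) lie in ℕ_0[v²] when σ_e(μ) = σ_e(ν) and in v·ℕ_0[v²] otherwise, it follows that σ_e(m(λ)) = (−1)^{ew} σ_e(λ), where m is the Mullineux involution. -/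
/-! The monomial `d_{m(λ)', λ}(v) = v^w` has a nonzero coefficient in degree `w`, so the parity
theorem gives `σ_e(m(λ)') = (−1)^w σ_e(λ)`. Combined with `σ_e(m(λ)') = (−1)^{(e−1)w} σ_e(m(λ))`
this yields `σ_e(m(λ)) = (−1)^{(e−1)w + w} σ_e(λ) = (−1)^{ew} σ_e(λ)`. -/

open Polynomial

namespace Int

theorem units_eq_neg_one_pow_mul_of_parity {a b : ℤˣ} {w : ℕ} (heven : a = b → Even w)
    (hodd : a ≠ b → Odd w) : a = (-1) ^ w * b := by
  by_cases h : a = b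
  · rw [(heven h).neg_one_pow, one_mul, h]
  · rw [(hodd h).neg_one_pow, neg_one_mul]
    exact units_ne_iff_eq_neg.mp h

theorem units_eq_neg_one_pow_mul_symm {a b : ℤˣ} {n : ℕ} (h : a = (-1) ^ n * b) :
    b = (-1) ^ n * a := by
  rw [h, ← mul_assoc, units_mul_self, one_mul]

end Int

theorem sign_eq_neg_one_pow_mul_of_eq_X_pow {P : Type} {sgn : P → ℤˣ} {d : P → P → ℤ[X]}
    (hparity : ∀ μ ν : P, d μ ν ≠ 0 →
      (sgn μ = sgn ν → ∀ k : ℕ, (d μ ν).coeff k ≠ 0 → Even k) ∧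
      (sgn μ ≠ sgn ν → ∀ k : ℕ, (d μ ν).coeff k ≠ 0 → Odd k))
    {μ ν : P} {w : ℕ} (hd : d μ ν = X ^ w) : sgn μ = (-1) ^ w * sgn ν := by
  have hcoeff : (d μ ν).coeff w ≠ 0 := by simp [hd]
  have hne : d μ ν ≠ 0 := fun h ↦ hcoeff (by rw [h, coeff_zero])
  exact Int.units_eq_neg_one_pow_mul_of_parity (fun h ↦ (hparity μ ν hne).1 h w hcoeff)
    (fun h ↦ (hparity μ ν hne).2 h w hcoeff)

/-- Sign of the Mullineux map.  Let `λ` be an `e`-regular partition of `e`-weight `w`,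
`m` the Mullineux involution, `conj` conjugation of partitions, `sgn = σ_e` the
relative `e`-sign, and `d` the `v`-decomposition numbers.  Given
`d_{m(λ)', λ}(v) = v^w`, the parity theorem (nonzero `d_{μν}` lies in `ℕ₀[v²]` when
`σ_e(μ) = σ_e(ν)` and in `v·ℕ₀[v²]` otherwise), and
`σ_e(m(λ)') = (−1)^{(e−1)w} σ_e(m(λ))`, it follows that
`σ_e(m(λ)) = (−1)^{ew} σ_e(λ)`. -/
theorem mullineux_sign {P : Type} (e w : ℕ) (he : 2 ≤ e)
    (conj m : P → P) (sgn : P → ℤˣ) (d : P → P → Polynomial ℤ) (l : P)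
    (hd : d (conj (m l)) l = Polynomial.X ^ w)
    (hparity : ∀ μ ν : P, d μ ν ≠ 0 →
      (sgn μ = sgn ν → ∀ k : ℕ, (d μ ν).coeff k ≠ 0 → Even k) ∧
      (sgn μ ≠ sgn ν → ∀ k : ℕ, (d μ ν).coeff k ≠ 0 → Odd k))
    (hconj : sgn (conj (m l)) = (-1) ^ ((e - 1) * w) * sgn (m l)) :
    sgn (m l) = (-1) ^ (e * w) * sgn l := by
  have hdecomp : sgn (conj (m l)) = (-1) ^ w * sgn l :=
    sign_eq_neg_one_pow_mul_of_eq_X_pow hparity hd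
  have hexp : (e - 1) * w + w = e * w := by
    rw [← Nat.succ_mul, Nat.succ_eq_add_one, Nat.sub_add_cancel (by omega)]
  rw [Int.units_eq_neg_one_pow_mul_symm hconj, hdecomp, ← mul_assoc, ← pow_add, hexp]
end

section
/- In the setting of a [3:2]-pair of weight-3 blocks, the four exceptional partitions satisfy: σ_p(α) = σ_p(γ) ≠ σ_p(β) = σ_p(δ), where α, β, γ, δ are the partitions whose abacus displays on runners i−1 and i are as in the [3:2]-pair configuration. -/
/-- The bead configuration of the abacus with `p` runners in which runner `j` carries
beads exactly in the rows `rows j` (position of runner `j`, row `m` is `j + p·m`). -/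
def abacusOf (p : ℕ) (rows : ℕ → Finset ℕ) : Finset ℕ :=
  (Finset.range p).biUnion (fun j => (rows j).image (fun m => j + p * m))

section Machinery

private lemma mul_pred_add (p m : ℕ) (hm : 1 ≤ m) : p * m = p * (m - 1) + p := by
  obtain ⟨m₀, rfl⟩ : ∃ m₀, m = m₀ + 1 := ⟨m - 1, by omega⟩
  simp [Nat.mul_succ]

private lemma modd (p j m : ℕ) (hj : j < p) : (j + p * m) % p = j := by
  rw [Nat.add_mul_mod_self_left, Nat.mod_eq_of_lt hj]

private lemma divd (p j m : ℕ) (hj : j < p) : (j + p * m) / p = m := by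
  rw [Nat.add_mul_div_left _ _ (by omega : 0 < p), Nat.div_eq_of_lt hj, Nat.zero_add]

private lemma eq_decomp (p j m x : ℕ) (hj : j < p) :
    x = j + p * m ↔ x % p = j ∧ x / p = m := by
  constructor
  · rintro rfl; exact ⟨modd p j m hj, divd p j m hj⟩
  · rintro ⟨h1, h2⟩
    conv_lhs => rw [← Nat.mod_add_div x p]
    rw [h1, h2]

private lemma mem_abacusOf {p : ℕ} (hp : 0 < p) (rows : ℕ → Finset ℕ) (x : ℕ) :
    x ∈ abacusOf p rows ↔ x / p ∈ rows (x % p) := by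
  unfold abacusOf
  simp only [Finset.mem_biUnion, Finset.mem_range, Finset.mem_image]
  constructor
  · rintro ⟨j, hj, m, hm, rfl⟩
    rw [modd p j m hj, divd p j m hj]; exact hm
  · intro h
    exact ⟨x % p, Nat.mod_lt _ hp, x / p, h, Nat.mod_add_div x p⟩

private lemma interval_iff (p j j' m m' : ℕ) (hj : j < p) (hj' : j' < p) (hm : 1 ≤ m) :
    (j + p * (m - 1) < j' + p * m' ∧ j' + p * m' < j + p * m) ↔
      ((j' < j ∧ m' = m) ∨ (j < j' ∧ m' = m - 1)) := by
  obtain ⟨m₀, rfl⟩ : ∃ m₀, m = m₀ + 1 := ⟨m - 1, by omega⟩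
  simp only [Nat.add_sub_cancel]
  rcases Nat.lt_trichotomy m' m₀ with h | h | h
  · have h2 : p * (m' + 1) ≤ p * m₀ := Nat.mul_le_mul_left p (by omega)
    have h3 : p * (m' + 1) = p * m' + p := by ring
    have h4 : p * (m₀ + 1) = p * m₀ + p := by ring
    omega
  · subst h
    have h4 : p * (m' + 1) = p * m' + p := by ring
    omega
  · rcases Nat.lt_or_ge m' (m₀ + 2) with h2 | h2
    · have hm' : m' = m₀ + 1 := by omega
      subst hm'
      have h4 : p * (m₀ + 1) = p * m₀ + p := by ring
      omega
    · have h3 : p * (m₀ + 2) ≤ p * m' := Nat.mul_le_mul_left p h2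
      have h4 : p * (m₀ + 2) = p * m₀ + p + p := by ring
      have h5 : p * (m₀ + 1) = p * m₀ + p := by ring
      omega

private lemma abacus_move {p : ℕ} (hp : 0 < p) (rows rows' : ℕ → Finset ℕ) (j m : ℕ)
    (hj : j < p) (hm : 1 ≤ m)
    (hrow : rows' j = insert (m - 1) ((rows j).erase m))
    (hother : ∀ j', j' ≠ j → rows' j' = rows j') :
    insert (j + p * (m - 1)) ((abacusOf p rows).erase (j + p * m)) = abacusOf p rows' := by
  ext x
  rw [Finset.mem_insert, Finset.mem_erase, mem_abacusOf hp, mem_abacusOf hp]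
  by_cases hx : x % p = j
  · rw [hx, hrow, Finset.mem_insert, Finset.mem_erase]
    simp only [ne_eq, eq_decomp p j (m - 1) x hj, eq_decomp p j m x hj, hx,
      eq_self_iff_true, true_and] <;> tauto
  · have h1 : ¬ x = j + p * (m - 1) := by rw [eq_decomp p j (m - 1) x hj]; tauto
    have h2 : ¬ x = j + p * m := by rw [eq_decomp p j m x hj]; tauto
    rw [hother (x % p) hx]
    simp [h1, h2]

private lemma card_between {p : ℕ} (hp : 0 < p) (rows : ℕ → Finset ℕ) (j m : ℕ)
    (hj : j < p) (hm : 1 ≤ m) :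
    ((abacusOf p rows).filter (fun b => j + p * (m - 1) < b ∧ b < j + p * m)).card
      = ((Finset.range p).filter
          (fun j' => (j' < j ∧ m ∈ rows j') ∨ (j < j' ∧ m - 1 ∈ rows j'))).card := by
  classical
  have hset : (abacusOf p rows).filter (fun b => j + p * (m - 1) < b ∧ b < j + p * m)
      = ((Finset.range p).filter
          (fun j' => (j' < j ∧ m ∈ rows j') ∨ (j < j' ∧ m - 1 ∈ rows j'))).image
          (fun j' => j' + p * (if j' < j then m else m - 1)) := by
    ext b
    simp only [Finset.mem_filter, Finset.mem_image, Finset.mem_range, mem_abacusOf hp]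
    constructor
    · rintro ⟨hmem, hlt1, hlt2⟩
      have hj'p : b % p < p := Nat.mod_lt _ hp
      have hrep : b % p + p * (b / p) = b := Nat.mod_add_div b p
      have hd := (interval_iff p j (b % p) m (b / p) hj hj'p hm).1
        ⟨by rw [hrep]; exact hlt1, by rw [hrep]; exact hlt2⟩
      rcases hd with ⟨h1, h2⟩ | ⟨h1, h2⟩
      · exact ⟨b % p, ⟨hj'p, Or.inl ⟨h1, by rw [← h2]; exact hmem⟩⟩,
          by rw [if_pos h1, ← h2, hrep]⟩
      · exact ⟨b % p, ⟨hj'p, Or.inr ⟨h1, by rw [← h2]; exact hmem⟩⟩,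
          by rw [if_neg (by omega), ← h2, hrep]⟩
    · rintro ⟨j', ⟨hj'p, hpred⟩, rfl⟩
      rcases hpred with ⟨h1, h2⟩ | ⟨h1, h2⟩
      · rw [if_pos h1]
        have hb := (interval_iff p j j' m m hj hj'p hm).2 (Or.inl ⟨h1, rfl⟩)
        exact ⟨by rw [divd p j' m hj'p, modd p j' m hj'p]; exact h2, hb.1, hb.2⟩
      · rw [if_neg (by omega)]
        have hb := (interval_iff p j j' m (m - 1) hj hj'p hm).2 (Or.inr ⟨h1, rfl⟩)
        exact ⟨by rw [divd p j' (m - 1) hj'p, modd p j' (m - 1) hj'p]; exact h2, hb.1, hb.2⟩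
  rw [hset, Finset.card_image_of_injOn]
  intro x hx y hy hxy
  simp only [Finset.coe_filter, Set.mem_setOf_eq, Finset.mem_range] at hx hy
  have hx1 : x < p := hx.1
  have hy1 : y < p := hy.1
  have hxy' : x + p * (if x < j then m else m - 1) = y + p * (if y < j then m else m - 1) := hxy
  have hpm : p * m = p * (m - 1) + p := mul_pred_add p m hm
  clear hx hy hxy
  split_ifs at hxy' <;> omega

private lemma abacus_closed {p : ℕ} (hp : 0 < p) (rows : ℕ → Finset ℕ)
    (hcl : ∀ j k, k ∈ rows j → k - 1 ∈ rows j) :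
    ∀ a ∈ abacusOf p rows, p ≤ a → a - p ∈ abacusOf p rows := by
  intro a ha hpa
  rw [mem_abacusOf hp] at ha ⊢
  have h1 : a % p < p := Nat.mod_lt _ hp
  have h2 : a % p + p * (a / p) = a := Nat.mod_add_div a p
  have h3 : 1 ≤ a / p := by
    rcases Nat.eq_zero_or_pos (a / p) with h0 | h0
    · rw [h0, Nat.mul_zero] at h2; omega
    · exact h0
  have h5 : p * (a / p) = p * (a / p - 1) + p := mul_pred_add p (a / p) h3
  have h4 : a - p = a % p + p * (a / p - 1) := by omega
  rw [h4, modd p _ _ h1, divd p _ _ h1]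
  have := hcl (a % p) (a / p) ha
  exact this

end Machinery

section Newman

private lemma move_sum {e : ℕ} (he : 1 ≤ e) {B : Finset ℕ} {a : ℕ}
    (ha : a ∈ B) (hea : e ≤ a) (hv : a - e ∉ B) :
    (insert (a - e) (B.erase a)).sum id < B.sum id := by
  have h1 : a - e ∉ B.erase a := fun h => hv (Finset.mem_of_mem_erase h)
  rw [Finset.sum_insert h1]
  have h2 : id a + (B.erase a).sum id = B.sum id := Finset.add_sum_erase B id ha
  simp only [id] at h2 ⊢
  omega

private lemma reaches_exists (e : ℕ) (he : 1 ≤ e) (B : Finset ℕ) :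
    ∃ w t C, Reaches e B w t C := by
  classical
  suffices H : ∀ N B, Finset.sum B id ≤ N → ∃ w t C, Reaches e B w t C from
    H (B.sum id) B le_rfl
  intro N
  induction N using Nat.strong_induction_on with
  | _ N ih =>
    intro B hB
    by_cases hcl : ∀ a ∈ B, e ≤ a → a - e ∈ B
    · exact ⟨0, 0, B, Reaches.core B hcl⟩
    · push_neg at hcl
      obtain ⟨a, ha, hea, hv⟩ := hcl
      have hlt := move_sum he ha hea hv
      obtain ⟨w, t, C, h⟩ := ih ((insert (a - e) (B.erase a)).sum id) (by omega) _ le_rfl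
      exact ⟨w + 1, _, C, Reaches.step B w t C a ha hea hv h⟩

private lemma square_key {e : ℕ} {B : Finset ℕ} (x y : ℕ)
    (hx : x ∈ B) (hvx : x - e ∉ B) :
    ((insert (x - e) (B.erase x)).filter (fun b => y - e < b ∧ b < y)).card
        + (if y - e < x ∧ x < y then 1 else 0)
      = (B.filter (fun b => y - e < b ∧ b < y)).card
        + (if y - e < x - e ∧ x - e < y then 1 else 0) := by
  classical
  have hfe : (B.erase x).filter (fun b => y - e < b ∧ b < y)
      = (B.filter (fun b => y - e < b ∧ b < y)).erase x := Finset.filter_erase _ x B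
  have hxe : x - e ∉ ((B.filter (fun b => y - e < b ∧ b < y)).erase x) := fun hh =>
    hvx (Finset.mem_of_mem_filter _ (Finset.mem_of_mem_erase hh))
  have hc1 : ((insert (x - e) (B.erase x)).filter (fun b => y - e < b ∧ b < y)).card
      = ((B.filter (fun b => y - e < b ∧ b < y)).erase x).card
        + (if y - e < x - e ∧ x - e < y then 1 else 0) := by
    rw [Finset.filter_insert, hfe]
    split_ifs with h
    · rw [Finset.card_insert_of_notMem hxe]
    · rfl
  have hc2 : ((B.filter (fun b => y - e < b ∧ b < y)).erase x).card
        + (if y - e < x ∧ x < y then 1 else 0)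
      = (B.filter (fun b => y - e < b ∧ b < y)).card := by
    split_ifs with h
    · exact Finset.card_erase_add_one (Finset.mem_filter.2 ⟨hx, h⟩)
    · have hnm : x ∉ B.filter (fun b => y - e < b ∧ b < y) :=
        fun hm => h (Finset.mem_filter.1 hm).2
      rw [Finset.erase_eq_of_notMem hnm, Nat.add_zero]
  omega

private lemma square {e : ℕ} {B : Finset ℕ} {a a' : ℕ}
    (hea : e ≤ a) (hea' : e ≤ a') (hne : a ≠ a')
    (ha : a ∈ B) (ha' : a' ∈ B) (hv : a - e ∉ B) (hv' : a' - e ∉ B) :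
    ((B.filter (fun b => a - e < b ∧ b < a)).card
        + ((insert (a - e) (B.erase a)).filter (fun b => a' - e < b ∧ b < a')).card) % 2
      = ((B.filter (fun b => a' - e < b ∧ b < a')).card
        + ((insert (a' - e) (B.erase a')).filter (fun b => a - e < b ∧ b < a)).card) % 2 := by
  have K1 := square_key (e := e) (B := B) a a' ha hv
  have K2 := square_key (e := e) (B := B) a' a ha' hv'
  split_ifs at K1 K2 <;> omega

private lemma double_move {e : ℕ} (he : 1 ≤ e) {B : Finset ℕ} {a a' : ℕ}
    (hea : e ≤ a) (hea' : e ≤ a') (hne : a ≠ a')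
    (ha : a ∈ B) (ha' : a' ∈ B) (hv : a - e ∉ B) (hv' : a' - e ∉ B) :
    insert (a - e) ((insert (a' - e) (B.erase a')).erase a)
      = insert (a' - e) ((insert (a - e) (B.erase a)).erase a') := by
  have h1 : a' - e ≠ a := fun h => hv' (h ▸ ha)
  have h2 : a - e ≠ a' := fun h => hv (h ▸ ha')
  rw [Finset.erase_insert_of_ne h1, Finset.erase_insert_of_ne h2, Finset.insert_comm,
    Finset.erase_right_comm]

private lemma reaches_parity (e : ℕ) (he : 1 ≤ e) {B : Finset ℕ}
    {w t w' t' : ℕ} {C C' : Finset ℕ}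
    (h1 : Reaches e B w t C) (h2 : Reaches e B w' t' C') : t % 2 = t' % 2 := by
  classical
  suffices H : ∀ N B, Finset.sum B id ≤ N → ∀ w t C w' t' C',
      Reaches e B w t C → Reaches e B w' t' C' → t % 2 = t' % 2 from
    H (B.sum id) B le_rfl w t C w' t' C' h1 h2
  clear h1 h2
  intro N
  induction N using Nat.strong_induction_on with
  | _ N ih =>
    intro B hB w t C w' t' C' h1 h2
    cases h1 with
    | core _ hcl =>
      cases h2 with
      | core _ _ => rfl
      | step _ w2 t2 C2 a' ha' hea' hv' htail' => exact absurd (hcl a' ha' hea') hv'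
    | step _ w1 t1 C1 a ha hea hv htail =>
      cases h2 with
      | core _ hcl => exact absurd (hcl a ha hea) hv
      | step _ w2 t2 C2 a' ha' hea' hv' htail' =>
        by_cases hne : a = a'
        · subst hne
          have := ih ((insert (a - e) (B.erase a)).sum id)
            (by have := move_sum he ha hea hv; omega) _ le_rfl _ _ _ _ _ _ htail htail'
          omega
        · have ha'1 : a' ∈ insert (a - e) (B.erase a) :=
            Finset.mem_insert_of_mem (Finset.mem_erase.2 ⟨Ne.symm hne, ha'⟩)
          have hv'1 : a' - e ∉ insert (a - e) (B.erase a) := by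
            intro h
            rcases Finset.mem_insert.1 h with h | h
            · exact hne (by omega)
            · exact hv' (Finset.mem_of_mem_erase h)
          have ha2 : a ∈ insert (a' - e) (B.erase a') :=
            Finset.mem_insert_of_mem (Finset.mem_erase.2 ⟨hne, ha⟩)
          have hv2 : a - e ∉ insert (a' - e) (B.erase a') := by
            intro h
            rcases Finset.mem_insert.1 h with h | h
            · exact hne (by omega)
            · exact hv (Finset.mem_of_mem_erase h)
          obtain ⟨v, s, D, hN⟩ := reaches_exists e he
            (insert (a' - e) ((insert (a - e) (B.erase a)).erase a'))
          have E1 : Reaches e (insert (a - e) (B.erase a)) (v + 1)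
              (s + ((insert (a - e) (B.erase a)).filter
                (fun b => a' - e < b ∧ b < a')).card) D :=
            Reaches.step _ v s D a' ha'1 hea' hv'1 hN
          have hN2 : Reaches e (insert (a - e) ((insert (a' - e) (B.erase a')).erase a)) v s D := by
            rw [double_move he hea hea' hne ha ha' hv hv']
            exact hN
          have E2 : Reaches e (insert (a' - e) (B.erase a')) (v + 1)
              (s + ((insert (a' - e) (B.erase a')).filter
                (fun b => a - e < b ∧ b < a)).card) D :=
            Reaches.step _ v s D a ha2 hea hv2 hN2
          have p1 := ih ((insert (a - e) (B.erase a)).sum id)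
            (by have := move_sum he ha hea hv; omega) _ le_rfl _ _ _ _ _ _ htail E1
          have p2 := ih ((insert (a' - e) (B.erase a')).sum id)
            (by have := move_sum he ha' hea' hv'; omega) _ le_rfl _ _ _ _ _ _ htail' E2
          have sq := square hea hea' hne ha ha' hv hv'
          omega

end Newman

section Steps

private def rowsF (i : ℕ) (n : ℕ → ℕ) (S1 S2 : Finset ℕ) : ℕ → Finset ℕ :=
  fun j => if j = i - 1 then S1 else if j = i then S2 else Finset.range (n j)

private def Bfun (p i : ℕ) (n : ℕ → ℕ) (m : ℕ) : ℕ :=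
  ((Finset.range p).filter
    (fun j' => ¬ j' = i - 1 ∧ ¬ j' = i ∧
      ((j' < i ∧ m < n j') ∨ (i < j' ∧ m - 1 < n j')))).card

private lemma card_filter_or_singleton {s : Finset ℕ} {P Q : ℕ → Prop}
    [DecidablePred P] [DecidablePred Q] {y : ℕ} (hy : y ∈ s) (hQy : ¬ Q y)
    (H : ∀ x ∈ s, P x ↔ (Q x ∨ x = y)) :
    (s.filter P).card = (s.filter Q).card + 1 := by
  classical
  rw [Finset.filter_congr H, Finset.filter_or, Finset.filter_eq', if_pos hy,
    Finset.card_union_of_disjoint, Finset.card_singleton]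
  simp only [Finset.disjoint_singleton_right, Finset.mem_filter]
  exact fun h => hQy h.2

private lemma step_on_i (p i : ℕ) (n : ℕ → ℕ) (hi1 : 1 ≤ i) (hip : i < p)
    (S1 S2 S2' : Finset ℕ) (m : ℕ) (hm : 1 ≤ m)
    (hmem : m ∈ S2) (hnot : m - 1 ∉ S2) (hS1 : m ∉ S1)
    (hS2' : S2' = insert (m - 1) (S2.erase m))
    {w t C} (h : Reaches p (abacusOf p (rowsF i n S1 S2')) w t C) :
    Reaches p (abacusOf p (rowsF i n S1 S2)) (w + 1) (t + Bfun p i n m) C := by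
  classical
  have hp : 0 < p := by omega
  have hii : ¬ (i = i - 1) := by omega
  have hrowi : rowsF i n S1 S2 i = S2 := by simp [rowsF, hii]
  have hmemB : i + p * m ∈ abacusOf p (rowsF i n S1 S2) := by
    rw [mem_abacusOf hp, modd p i m hip, divd p i m hip, hrowi]; exact hmem
  have hmulp : p * m = p * (m - 1) + p := mul_pred_add p m hm
  have hpa : p ≤ i + p * m := by omega
  have hsub : i + p * m - p = i + p * (m - 1) := by omega
  have hvac : i + p * m - p ∉ abacusOf p (rowsF i n S1 S2) := by
    rw [hsub, mem_abacusOf hp, modd p i (m - 1) hip, divd p i (m - 1) hip, hrowi]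
    exact hnot
  have hset : insert (i + p * m - p) ((abacusOf p (rowsF i n S1 S2)).erase (i + p * m))
      = abacusOf p (rowsF i n S1 S2') := by
    rw [hsub]
    refine abacus_move hp _ _ i m hip hm ?_ ?_
    · rw [hrowi]; simp [rowsF, hii, hS2']
    · intro j' hj'
      simp only [rowsF]
      rcases eq_or_ne j' (i - 1) with h1 | h1
      · simp [h1]
      · rw [if_neg h1, if_neg h1, if_neg hj', if_neg hj']
  have hcard : ((abacusOf p (rowsF i n S1 S2)).filter
      (fun b => i + p * m - p < b ∧ b < i + p * m)).card = Bfun p i n m := by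
    simp only [hsub]
    rw [card_between hp _ i m hip hm]
    unfold Bfun
    congr 1
    refine Finset.filter_congr ?_
    intro j' hj'
    simp only [rowsF]
    rcases eq_or_ne j' (i - 1) with h1 | h1
    · subst h1
      rw [if_pos rfl]
      constructor
      · rintro (⟨-, hmS1⟩ | ⟨hlt, -⟩)
        · exact absurd hmS1 hS1
        · exact absurd hlt (by omega)
      · rintro ⟨habs, -⟩; exact absurd rfl habs
    · rw [if_neg h1]
      rcases eq_or_ne j' i with h2 | h2
      · subst h2
        constructor
        · rintro (⟨hlt, -⟩ | ⟨hlt, -⟩) <;> exact absurd hlt (by omega)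
        · rintro ⟨-, habs, -⟩; exact absurd rfl habs
      · rw [if_neg h2]
        simp only [Finset.mem_range]
        constructor
        · rintro (⟨hlt, hmn⟩ | ⟨hlt, hmn⟩)
          · exact ⟨h1, h2, Or.inl ⟨hlt, hmn⟩⟩
          · exact ⟨h1, h2, Or.inr ⟨hlt, hmn⟩⟩
        · rintro ⟨-, -, (⟨hlt, hmn⟩ | ⟨hlt, hmn⟩)⟩
          · exact Or.inl ⟨hlt, hmn⟩
          · exact Or.inr ⟨hlt, hmn⟩
  have H := Reaches.step _ w t C (i + p * m) hmemB hpa hvac (by rw [hset]; exact h)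
  rwa [hcard] at H

private lemma step_on_i1 (p i : ℕ) (n : ℕ → ℕ) (hi1 : 1 ≤ i) (hip : i < p)
    (S1 S2 S1' : Finset ℕ) (m : ℕ) (hm : 1 ≤ m)
    (hmem : m ∈ S1) (hnot : m - 1 ∉ S1) (hS2 : m - 1 ∈ S2)
    (hS1' : S1' = insert (m - 1) (S1.erase m))
    {w t C} (h : Reaches p (abacusOf p (rowsF i n S1' S2)) w t C) :
    Reaches p (abacusOf p (rowsF i n S1 S2)) (w + 1) (t + (Bfun p i n m + 1)) C := by
  classical
  have hp : 0 < p := by omega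
  have hj : i - 1 < p := by omega
  have hii : ¬ (i = i - 1) := by omega
  have hrow1 : rowsF i n S1 S2 (i - 1) = S1 := by simp [rowsF]
  have hrowi : rowsF i n S1 S2 i = S2 := by simp [rowsF, hii]
  have hmemB : (i - 1) + p * m ∈ abacusOf p (rowsF i n S1 S2) := by
    rw [mem_abacusOf hp, modd p _ m hj, divd p _ m hj, hrow1]; exact hmem
  have hmulp : p * m = p * (m - 1) + p := mul_pred_add p m hm
  have hpa : p ≤ (i - 1) + p * m := by omega
  have hsub : (i - 1) + p * m - p = (i - 1) + p * (m - 1) := by omega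
  have hvac : (i - 1) + p * m - p ∉ abacusOf p (rowsF i n S1 S2) := by
    rw [hsub, mem_abacusOf hp, modd p _ (m - 1) hj, divd p _ (m - 1) hj, hrow1]
    exact hnot
  have hset : insert ((i - 1) + p * m - p)
        ((abacusOf p (rowsF i n S1 S2)).erase ((i - 1) + p * m))
      = abacusOf p (rowsF i n S1' S2) := by
    rw [hsub]
    refine abacus_move hp _ _ (i - 1) m hj hm ?_ ?_
    · rw [hrow1]; simp [rowsF, hS1']
    · intro j' hj'
      simp only [rowsF]
      rw [if_neg hj', if_neg hj']
  have hcard : ((abacusOf p (rowsF i n S1 S2)).filter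
      (fun b => (i - 1) + p * m - p < b ∧ b < (i - 1) + p * m)).card
      = Bfun p i n m + 1 := by
    simp only [hsub]
    rw [card_between hp _ (i - 1) m hj hm]
    unfold Bfun
    refine card_filter_or_singleton (Finset.mem_range.2 hip) (by omega) ?_
    intro j' hj'
    simp only [rowsF]
    rcases eq_or_ne j' (i - 1) with h1 | h1
    · subst h1
      rw [if_pos rfl]
      constructor
      · rintro (⟨hlt, -⟩ | ⟨hlt, -⟩) <;> exact absurd hlt (by omega)
      · rintro (⟨habs, -⟩ | habs)
        · exact absurd rfl habs
        · exact absurd habs (by omega)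
    · rw [if_neg h1]
      rcases eq_or_ne j' i with h2 | h2
      · subst h2
        rw [if_pos rfl]
        constructor
        · intro _; exact Or.inr rfl
        · intro _; exact Or.inr ⟨by omega, hS2⟩
      · rw [if_neg h2]
        simp only [Finset.mem_range]
        constructor
        · rintro (⟨hlt, hmn⟩ | ⟨hlt, hmn⟩)
          · exact Or.inl ⟨h1, h2, Or.inl ⟨by omega, hmn⟩⟩
          · exact Or.inl ⟨h1, h2, Or.inr ⟨by omega, hmn⟩⟩
        · rintro (⟨-, -, (⟨hlt, hmn⟩ | ⟨hlt, hmn⟩)⟩ | habs)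
          · exact Or.inl ⟨by omega, hmn⟩
          · exact Or.inr ⟨by omega, hmn⟩
          · exact absurd habs h2
  have H := Reaches.step _ w t C ((i - 1) + p * m) hmemB hpa hvac (by rw [hset]; exact h)
  rwa [hcard] at H

private lemma core_rowsF (p i : ℕ) (n : ℕ → ℕ) (hi1 : 1 ≤ i) (hip : i < p)
    (r1 r2 : ℕ) :
    Reaches p (abacusOf p (rowsF i n (Finset.range r1) (Finset.range r2))) 0 0
      (abacusOf p (rowsF i n (Finset.range r1) (Finset.range r2))) := by
  refine Reaches.core _ (abacus_closed (by omega) _ ?_)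
  intro j k
  simp only [rowsF]
  split_ifs <;> simp only [Finset.mem_range] <;> omega

end Steps

private lemma pow_congr {s t : ℕ} (h : s % 2 = t % 2) : (-1 : ℤ) ^ s = (-1 : ℤ) ^ t := by
  rcases Nat.even_or_odd s with hs | hs
  · have ht : Even t := by rw [Nat.even_iff] at hs ⊢; omega
    rw [hs.neg_one_pow, ht.neg_one_pow]
  · have ht : Odd t := by rw [Nat.odd_iff] at hs ⊢; omega
    rw [hs.neg_one_pow, ht.neg_one_pow]

private lemma pow_ne {s t : ℕ} (h : s % 2 ≠ t % 2) : (-1 : ℤ) ^ s ≠ (-1 : ℤ) ^ t := by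
  rcases Nat.even_or_odd s with hs | hs
  · have ht : Odd t := by rw [Nat.even_iff] at hs; rw [Nat.odd_iff]; omega
    rw [hs.neg_one_pow, ht.neg_one_pow]; norm_num
  · have ht : Even t := by rw [Nat.odd_iff] at hs; rw [Nat.even_iff]; omega
    rw [hs.neg_one_pow, ht.neg_one_pow]; norm_num

/-- In a `[3:2]`-pair of weight-`3` blocks of `𝔽𝔖ₙ` (`p ≥ 5`, runner `i` of the
`p`-core having two more beads than runner `i−1`), the four exceptional partitions
`α, β, γ, δ` — whose displays agree with the core on all runners `j ∉ {i−1, i}`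
(runner `j` packed with `n j` beads) and whose runners `i−1, i` are as displayed in
the paper — satisfy `σ_p(α) = σ_p(γ) ≠ σ_p(β) = σ_p(δ)`. -/
theorem exceptional_partition_signs (p i c : ℕ) (n : ℕ → ℕ)
    (hp : 5 ≤ p) (hi1 : 1 ≤ i) (hip : i < p)
    (wa ta wb tb wc tc wd td : ℕ) (Ca Cb Cc Cd : Finset ℕ)
    (hα : Reaches p (abacusOf p (fun j =>
      if j = i - 1 then Finset.range (c + 2)
      else if j = i then Finset.range (c + 1) ∪ {c + 2, c + 3, c + 4}
      else Finset.range (n j))) wa ta Ca)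
    (hβ : Reaches p (abacusOf p (fun j =>
      if j = i - 1 then Finset.range (c + 1) ∪ {c + 2}
      else if j = i then Finset.range (c + 2) ∪ {c + 3, c + 4}
      else Finset.range (n j))) wb tb Cb)
    (hγ : Reaches p (abacusOf p (fun j =>
      if j = i - 1 then Finset.range (c + 1) ∪ {c + 3}
      else if j = i then Finset.range (c + 3) ∪ {c + 4}
      else Finset.range (n j))) wc tc Cc)
    (hδ : Reaches p (abacusOf p (fun j =>
      if j = i - 1 then Finset.range (c + 1) ∪ {c + 4}
      else if j = i then Finset.range (c + 4)
      else Finset.range (n j))) wd td Cd) :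
    (-1 : ℤ) ^ ta = (-1 : ℤ) ^ tc ∧ (-1 : ℤ) ^ tb = (-1 : ℤ) ^ td ∧
      (-1 : ℤ) ^ ta ≠ (-1 : ℤ) ^ tb := by
  classical
  have hp1 : (1 : ℕ) ≤ p := by omega
  have hcore := core_rowsF p i n hi1 hip (c + 2) (c + 4)
  -- abbreviations for the runner contents
  set A0 : Finset ℕ := Finset.range (c + 1) ∪ {c + 2, c + 3, c + 4} with hA0
  set A1 : Finset ℕ := Finset.range (c + 2) ∪ {c + 3, c + 4} with hA1
  set A2 : Finset ℕ := Finset.range (c + 3) ∪ {c + 4} with hA2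
  -- α path : three moves on runner i
  have Hα3 := step_on_i p i n hi1 hip (Finset.range (c + 2)) A2 (Finset.range (c + 4))
    (c + 4) (by omega)
    (by simp [hA2, Finset.mem_union, Finset.mem_insert, Finset.mem_range])
    (by simp [hA2, Finset.mem_union, Finset.mem_insert, Finset.mem_range])
    (by simp [Finset.mem_range])
    (by ext x; simp [hA2, Finset.mem_union, Finset.mem_insert, Finset.mem_erase,
        Finset.mem_range]; omega) hcore
  have Hα2 := step_on_i p i n hi1 hip (Finset.range (c + 2)) A1 A2 (c + 3) (by omega)
    (by simp [hA1]) (by simp [hA1]) (by simp [Finset.mem_range])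
    (by ext x; simp [hA1, hA2, Finset.mem_erase]; omega) Hα3
  have Hα1 := step_on_i p i n hi1 hip (Finset.range (c + 2)) A0 A1 (c + 2) (by omega)
    (by simp [hA0]) (by simp [hA0]) (by simp [Finset.mem_range])
    (by ext x; simp [hA0, hA1, Finset.mem_erase]; omega) Hα2
  -- β path : runner i−1 first, then two moves on runner i
  have Hβ3 := step_on_i p i n hi1 hip (Finset.range (c + 2)) A2 (Finset.range (c + 4))
    (c + 4) (by omega) (by simp [hA2]) (by simp [hA2]) (by simp [Finset.mem_range])
    (by ext x; simp [hA2, Finset.mem_erase]; omega) hcore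
  have Hβ2 := step_on_i p i n hi1 hip (Finset.range (c + 2)) A1 A2 (c + 3) (by omega)
    (by simp [hA1]) (by simp [hA1]) (by simp [Finset.mem_range])
    (by ext x; simp [hA1, hA2, Finset.mem_erase]; omega) Hβ3
  have Hβ1 := step_on_i1 p i n hi1 hip (Finset.range (c + 1) ∪ {c + 2}) A1
    (Finset.range (c + 2)) (c + 2) (by omega)
    (by simp) (by simp) (by simp [hA1])
    (by ext x; simp [Finset.mem_erase]; omega) Hβ2
  -- γ path : two moves on runner i−1 first, then one on runner i
  have Hγ3 := step_on_i p i n hi1 hip (Finset.range (c + 2)) A2 (Finset.range (c + 4))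
    (c + 4) (by omega) (by simp [hA2]) (by simp [hA2]) (by simp [Finset.mem_range])
    (by ext x; simp [hA2, Finset.mem_erase]; omega) hcore
  have Hγ2 := step_on_i1 p i n hi1 hip (Finset.range (c + 1) ∪ {c + 2}) A2
    (Finset.range (c + 2)) (c + 2) (by omega)
    (by simp) (by simp) (by simp [hA2])
    (by ext x; simp [Finset.mem_erase]; omega) Hγ3
  have Hγ1 := step_on_i1 p i n hi1 hip (Finset.range (c + 1) ∪ {c + 3}) A2
    (Finset.range (c + 1) ∪ {c + 2}) (c + 3) (by omega)
    (by simp) (by simp) (by simp [hA2])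
    (by ext x; simp [Finset.mem_erase]) Hγ2
  -- δ path : three moves on runner i−1
  have Hδ3 := step_on_i1 p i n hi1 hip (Finset.range (c + 1) ∪ {c + 2})
    (Finset.range (c + 4)) (Finset.range (c + 2)) (c + 2) (by omega)
    (by simp) (by simp) (by simp)
    (by ext x; simp [Finset.mem_erase]; omega) hcore
  have Hδ2 := step_on_i1 p i n hi1 hip (Finset.range (c + 1) ∪ {c + 3})
    (Finset.range (c + 4)) (Finset.range (c + 1) ∪ {c + 2}) (c + 3) (by omega)
    (by simp) (by simp) (by simp)
    (by ext x; simp [Finset.mem_erase]) Hδ3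
  have Hδ1 := step_on_i1 p i n hi1 hip (Finset.range (c + 1) ∪ {c + 4})
    (Finset.range (c + 4)) (Finset.range (c + 1) ∪ {c + 3}) (c + 4) (by omega)
    (by simp) (by simp) (by simp)
    (by ext x; simp [Finset.mem_erase]) Hδ2
  have pa := reaches_parity p hp1 hα Hα1
  have pb := reaches_parity p hp1 hβ Hβ1
  have pc := reaches_parity p hp1 hγ Hγ1
  have pd := reaches_parity p hp1 hδ Hδ1
  refine ⟨pow_congr ?_, pow_congr ?_, pow_ne ?_⟩ <;> omega
end
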